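/- arXiv:2308.01718 — 2 statements merged into one kernel-verified Lean document; each statement's English description precedes it below -/
import Mathlib

section
/- Let n ≥ 1, l ∈ [0,2n], and 𝐚 = (a_1,…,a_l) a strictly increasing sequence of integers in [1,2n]. Suppose a_l is even and there exists r ∈ [1,l−1] such that a_{l−r} = a_l − r is odd. Then Rem(𝐚) = Rem(a_1,…,a_{l−r−1}) ⊔ [a_l − t, a_l], where t ∈ [0,r] is the maximal odd integer such that a_l − t < 2(l−t) − |Rem(a_1,…,a_{l−r−1})|, with the convention that [a_l − t, a_l] = ∅ (i.e., t = −1) when no such odd t exists. -/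
/-!
The last `r + 1` entries of `𝐚` are the consecutive run `v, v+1, …, v+r` (strict monotonicity),
with `v` odd and hence `r` odd, and everything removable before the run is smaller than `v`.
Reading the run pair by pair, with `C = |Rem(a_1,…,a_{l-r-1})|` and `m = l - r - 1`, the pair
`(v+2j, v+2j+1)` becomes removable as soon as `v + C < 2m + 2j + 2`; after that, every removal adds
two to `|Rem|` and the next pair adds two to the length, so the condition persists. Hence the run
contributes exactly the interval `[v + 2j₀, v + r]` for the first such `j₀`, and
`t = r - 2j₀` is the largest odd `t` in the statement's inequality.
-/

/-- `remAux` computes the set of removable entries of a strictly increasing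
sequence, given as a list in *reversed* order (so the head is the last entry). -/
def remAux : List ℕ → Finset ℕ
  | [] => ∅
  | [_] => ∅
  | b :: a :: rest =>
    if Even b ∧ a + 1 = b ∧ b + (remAux rest).card + 1 < 2 * (rest.length + 2) then
      insert a (insert b (remAux rest))
    else remAux (a :: rest)

/-- `remSet 𝐚` : the set `Rem(𝐚)` of removable entries of the strictly
increasing sequence `𝐚 = (a_1, …, a_l)` (given in its natural order). -/
def remSet (l : List ℕ) : Finset ℕ := remAux l.reverse

/-- `redSeq 𝐚` : the reduction `red(𝐚)`, i.e. `𝐚` with the removable entries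
removed. -/
def redSeq (l : List ℕ) : List ℕ := l.filter (fun x => decide (x ∉ remSet l))

theorem List.Pairwise.getElem_add_sub_le {l : List ℕ} (hl : l.Pairwise (· < ·)) {i j : ℕ}
    (hij : i ≤ j) (hj : j < l.length) : l[i] + (j - i) ≤ l[j] := by
  induction j with
  | zero => simp [Nat.le_zero.1 hij]
  | succ j ih =>
    rcases hij.eq_or_lt with rfl | hij
    · simp
    · have h₁ := ih (by omega) (by omega)
      have h₂ := List.pairwise_iff_getElem.1 hl j (j + 1) (by omega) hj (by omega)
      omega

theorem List.Pairwise.drop_eq_range' {l : List ℕ} (hl : l.Pairwise (· < ·)) {i : ℕ}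
    (hi : i < l.length) (hlast : l[l.length - 1] ≤ l[i] + (l.length - 1 - i)) :
    l.drop i = List.range' l[i] (l.length - i) := by
  refine List.ext_getElem (by simp) fun j hj _ => ?_
  rw [List.getElem_drop, List.getElem_range']
  rw [List.length_drop] at hj
  have h₁ := hl.getElem_add_sub_le (i := i) (j := i + j) (by omega) (by omega)
  have h₂ := hl.getElem_add_sub_le (i := i + j) (j := l.length - 1) (by omega) (by omega)
  omega

theorem remAux_subset_toFinset (L : List ℕ) : remAux L ⊆ L.toFinset := by
  induction L using remAux.induct with
  | case1 | case2 => simp [remAux]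
  | case3 b a rest h ih =>
    rw [remAux, if_pos h, List.toFinset_cons, List.toFinset_cons, Finset.insert_comm]
    exact Finset.insert_subset_insert _ (Finset.insert_subset_insert _ ih)
  | case4 b a rest h _ ih =>
    rw [remAux, if_neg h, List.toFinset_cons]
    exact ih.trans (Finset.subset_insert _ _)

theorem remSet_subset_toFinset (l : List ℕ) : remSet l ⊆ l.toFinset := by
  simpa [remSet] using remAux_subset_toFinset l.reverse

theorem remSet_append_of_not_even {b : ℕ} (hb : ¬ Even b) (l : List ℕ) :
    remSet (l ++ [b]) = remSet l := by
  rw [remSet, remSet, List.reverse_append, List.reverse_singleton, List.singleton_append]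
  cases l.reverse with
  | nil => rfl
  | cons a rest => rw [remAux, if_neg (by tauto)]

theorem remSet_append_pair (l : List ℕ) (x y : ℕ) :
    remSet (l ++ [x, y]) =
      if Even y ∧ x + 1 = y ∧ y + (remSet l).card + 1 < 2 * (l.length + 2) then
        insert x (insert y (remSet l))
      else remSet (l ++ [x]) := by
  rw [remSet, remSet, remSet, show (l ++ [x, y]).reverse = y :: x :: l.reverse by simp,
    show (l ++ [x]).reverse = x :: l.reverse by simp, remAux, List.length_reverse]

theorem remSet_forall_lt_of_pairwise {l rest : List ℕ} {v : ℕ}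
    (h : (l ++ v :: rest).Pairwise (· < ·)) : ∀ x ∈ remSet l, x < v := fun x hx =>
  (List.pairwise_append.1 h).2.2 x (List.mem_toFinset.1 (remSet_subset_toFinset l hx)) v
    List.mem_cons_self

theorem disjoint_Icc_of_forall_lt {s : Finset ℕ} {c d : ℕ} (hs : ∀ x ∈ s, x < c) :
    Disjoint s (Finset.Icc c d) :=
  Finset.disjoint_left.2 fun x hx hx' => (hs x hx).not_ge (Finset.mem_Icc.1 hx').1

theorem remSet_append_range' {l : List ℕ} {v j₀ : ℕ} (hv : Odd v)
    (hlt : ∀ x ∈ remSet l, x < v)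
    (hj₀ : ∀ j, v + (remSet l).card < 2 * l.length + 2 * j + 2 ↔ j₀ ≤ j) (k : ℕ) :
    remSet (l ++ List.range' v (2 * k)) =
      remSet l ∪ Finset.Icc (v + 2 * min k j₀) (v + 2 * k - 1) := by
  have hv₁ := hv.pos
  induction k with
  | zero => simp [Finset.Icc_eq_empty_of_lt (Nat.sub_one_lt_of_lt hv₁)]
  | succ k ih =>
    have hsplit : l ++ List.range' v (2 * (k + 1)) =
        (l ++ List.range' v (2 * k)) ++ [v + 2 * k, v + 2 * k + 1] := by
      rw [List.append_assoc, show 2 * (k + 1) = 2 * k + 2 by ring, ← List.range'_append]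
      simp [List.range']
    have hcard : (remSet (l ++ List.range' v (2 * k))).card =
        (remSet l).card + (2 * k - 2 * min k j₀) := by
      have hdisj := disjoint_Icc_of_forall_lt (d := v + 2 * k - 1)
        fun x hx => (hlt x hx).trans_le (Nat.le_add_right v (2 * min k j₀))
      rw [ih, Finset.card_union_of_disjoint hdisj, Nat.card_Icc]
      omega
    have hlen : (l ++ List.range' v (2 * k)).length = l.length + 2 * k := by simp
    have hodd : Odd (v + 2 * k) := hv.add_even (even_two_mul k)
    rw [hsplit, remSet_append_pair, hlen, hcard]
    by_cases hk : j₀ ≤ k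
    · have := (hj₀ j₀).2 le_rfl
      rw [if_pos ⟨hodd.add_one, rfl, by omega⟩, ih]
      ext x
      simp only [Finset.mem_insert, Finset.mem_union, Finset.mem_Icc]
      grind
    · have := mt (hj₀ k).1 hk
      rw [if_neg (by omega), remSet_append_of_not_even (Nat.not_even_iff_odd.2 hodd), ih,
        Finset.Icc_eq_empty_of_lt (by omega), Finset.Icc_eq_empty_of_lt (by omega)]

theorem stmt8_general (a : List ℕ)
    (hinc : a.Chain' (· < ·)) (h : a ≠ [])
    (heven : Even (a.getLast h)) (r : ℕ) (hr1 : 1 ≤ r) (hr2 : r ≤ a.length - 1)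
    (hval : a.getD (a.length - r - 1) 0 + r = a.getLast h)
    (hodd : Odd (a.getD (a.length - r - 1) 0)) :
    (∀ t, (Odd t ∧ t ≤ r ∧
        a.getLast h + (remSet (a.take (a.length - r - 1))).card <
          2 * (a.length - t) + t) →
      (∀ t', (Odd t' ∧ t' ≤ r ∧
        a.getLast h + (remSet (a.take (a.length - r - 1))).card <
          2 * (a.length - t') + t') → t' ≤ t) →
      remSet a =
        remSet (a.take (a.length - r - 1)) ∪
          Finset.Icc (a.getLast h - t) (a.getLast h) ∧
      Disjoint (remSet (a.take (a.length - r - 1)))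
        (Finset.Icc (a.getLast h - t) (a.getLast h))) ∧
    ((∀ t, ¬ (Odd t ∧ t ≤ r ∧
        a.getLast h + (remSet (a.take (a.length - r - 1))).card <
          2 * (a.length - t) + t)) →
      remSet a = remSet (a.take (a.length - r - 1))) := by
  have hpos := List.length_pos_iff.2 h
  set m := a.length - r - 1
  set v := a.getD m 0
  rw [← hval]
  have hsplit : a = a.take m ++ List.range' v (r + 1) := by
    have hm : m < a.length := by omega
    have hpw := List.isChain_iff_pairwise.1 hinc
    conv_lhs => rw [← List.take_append_drop m a]
    have hlast : a[a.length - 1] ≤ a[m] + (a.length - 1 - m) := by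
      rw [← List.getLast_eq_getElem h, ← List.getD_eq_getElem a 0 hm]
      omega
    rw [hpw.drop_eq_range' hm hlast, ← List.getD_eq_getElem a 0 hm,
      show a.length - m = r + 1 by omega]
  have hlt := remSet_forall_lt_of_pairwise
    (List.range'_succ (s := v) ▸ hsplit ▸ List.isChain_iff_pairwise.1 hinc)
  obtain ⟨k, hk⟩ : ∃ k, r + 1 = 2 * k := by
    obtain ⟨s, hs⟩ := hodd
    obtain ⟨w, hw⟩ := heven
    exact ⟨(r + 1) / 2, by omega⟩
  have hlen : (a.take m).length = m := List.length_take_of_le (by omega)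
  obtain ⟨j₀, hj₀⟩ : ∃ j₀, ∀ j, v + (remSet (a.take m)).card <
      2 * (a.take m).length + 2 * j + 2 ↔ j₀ ≤ j :=
    ⟨(v + (remSet (a.take m)).card - 2 * m) / 2, fun j => by omega⟩
  have hrem : remSet a = remSet (a.take m ++ List.range' v (2 * k)) := by rw [← hk, ← hsplit]
  rw [hrem, remSet_append_range' hodd hlt hj₀ k]
  refine ⟨fun t ⟨htodd, htr, ht⟩ hmax => ?_, fun hno => ?_⟩
  · rw [Nat.odd_iff] at htodd
    have hj₀k := hj₀ (k - 1)
    have hj₀j₀ := hj₀ j₀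
    have hj₀t := hj₀ (k - (t + 1) / 2)
    have ht' := hmax (2 * (k - j₀) - 1) ⟨Nat.odd_iff.2 (by omega), by omega, by omega⟩
    have hIcc : Finset.Icc (v + r - t) (v + r) =
        Finset.Icc (v + 2 * min k j₀) (v + 2 * k - 1) := by
      congr 1 <;> omega
    rw [hIcc]
    exact ⟨rfl, disjoint_Icc_of_forall_lt fun x hx => (hlt x hx).trans_le (by omega)⟩
  · have hj₀k := hj₀ (k - 1)
    have h₁ := not_lt.1 fun ht => hno 1 ⟨odd_one, hr1, ht⟩
    rw [Finset.Icc_eq_empty_of_lt (a := v + 2 * min k j₀) (by omega), Finset.union_empty]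

theorem stmt8 (n : ℕ) (hn : 1 ≤ n) (a : List ℕ)
    (hinc : a.Chain' (· < ·)) (hbd : ∀ x ∈ a, 1 ≤ x ∧ x ≤ 2 * n)
    (hlen : a.length ≤ 2 * n) (h : a ≠ [])
    (heven : Even (a.getLast h)) (r : ℕ) (hr1 : 1 ≤ r) (hr2 : r ≤ a.length - 1)
    (hval : a.getD (a.length - r - 1) 0 + r = a.getLast h)
    (hodd : Odd (a.getD (a.length - r - 1) 0)) :
    (∀ t, (Odd t ∧ t ≤ r ∧
        a.getLast h + (remSet (a.take (a.length - r - 1))).card <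
          2 * (a.length - t) + t) →
      (∀ t', (Odd t' ∧ t' ≤ r ∧
        a.getLast h + (remSet (a.take (a.length - r - 1))).card <
          2 * (a.length - t') + t') → t' ≤ t) →
      remSet a =
        remSet (a.take (a.length - r - 1)) ∪
          Finset.Icc (a.getLast h - t) (a.getLast h) ∧
      Disjoint (remSet (a.take (a.length - r - 1)))
        (Finset.Icc (a.getLast h - t) (a.getLast h))) ∧
    ((∀ t, ¬ (Odd t ∧ t ≤ r ∧
        a.getLast h + (remSet (a.take (a.length - r - 1))).card <
          2 * (a.length - t) + t)) →
      remSet a = remSet (a.take (a.length - r - 1))) :=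
  stmt8_general a hinc h heven r hr1 hr2 hval hodd
end

section
/- Let n ≥ 1, l ∈ [0,2n], and 𝐚 = (a_1,…,a_l) a strictly increasing sequence of integers in [1,2n]. Then the sequence red(𝐚) = (b_1,…,b_k) is symplectic, i.e., b_i ≥ 2i − 1 for all i ∈ [1,k]; moreover its length k satisfies 0 ≤ k ≤ min(l, 2n − l) and l − k is even. -/
def IsRemovablePair (b a : ℕ) (rest : List ℕ) : Prop :=
  Even b ∧ a + 1 = b ∧ b + (remAux rest).card + 1 < 2 * (rest.length + 2)

/-- `b_{i+1} ≥ 2(i + 1) - 1`, in 0-based indexing. -/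
def IsSymplectic (l : List ℕ) : Prop :=
  ∀ i (hi : i < l.length), 2 * i + 1 ≤ l[i]

def redAux (r : List ℕ) : List ℕ := r.filter (fun x => decide (x ∉ remAux r))

lemma redSeq_eq_reverse_redAux (l : List ℕ) : redSeq l = (redAux l.reverse).reverse := by
  rw [redSeq, remSet, redAux, List.filter_reverse, List.reverse_reverse]

section IsSymplectic

variable {l : List ℕ}

lemma isSymplectic_append_singleton {x : ℕ} :
    IsSymplectic (l ++ [x]) ↔ IsSymplectic l ∧ 2 * l.length + 1 ≤ x := by
  constructor
  · intro h
    refine ⟨fun i hi => ?_, ?_⟩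
    · have := h i (by rw [List.length_append, List.length_singleton]; omega)
      rwa [List.getElem_append_left hi] at this
    · simpa using h l.length (by simp)
  · rintro ⟨hl, hx⟩ i hi
    rw [List.getElem_append]
    split_ifs with hil
    · exact hl i hil
    · rw [List.length_append, List.length_singleton] at hi
      simpa [show i = l.length by omega] using hx

lemma IsSymplectic.two_mul_length_le {m : ℕ} (hl : IsSymplectic l) (hm : ∀ x ∈ l, x ≤ m) :
    2 * l.length ≤ m + 1 := by
  rcases l.eq_nil_or_concat' with rfl | ⟨l', x, rfl⟩
  · simp
  · have := (isSymplectic_append_singleton.1 hl).2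
    have := hm x (by simp)
    rw [List.length_append, List.length_singleton]
    omega

end IsSymplectic

section remAux

variable {b a : ℕ} {rest : List ℕ}

lemma mem_of_mem_remAux {r : List ℕ} {x : ℕ} (hx : x ∈ remAux r) : x ∈ r := by
  induction r using remAux.induct with
  | case1 | case2 => simp [remAux] at hx
  | case3 b a rest h ih =>
    rw [remAux, if_pos h] at hx
    simp only [Finset.mem_insert] at hx
    rcases hx with rfl | rfl | hx
    · simp
    · simp
    · simp [ih hx]
  | case4 b a rest h _ ih =>
    rw [remAux, if_neg h] at hx
    exact List.mem_cons_of_mem _ (ih hx)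

lemma remAux_cons_cons_of_pos (h : IsRemovablePair b a rest) :
    remAux (b :: a :: rest) = insert a (insert b (remAux rest)) := by
  rw [remAux]
  exact if_pos h

lemma remAux_cons_cons_of_neg (h : ¬IsRemovablePair b a rest) :
    remAux (b :: a :: rest) = remAux (a :: rest) := by
  rw [remAux]
  exact if_neg h

variable (hp : (b :: a :: rest).Pairwise (· > ·))
include hp

lemma card_remAux_cons_cons_of_pos (h : IsRemovablePair b a rest) :
    (remAux (b :: a :: rest)).card = (remAux rest).card + 2 := by
  simp only [List.pairwise_cons, List.mem_cons, forall_eq_or_imp] at hp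
  obtain ⟨⟨hab, hb⟩, ha, -⟩ := hp
  have hbr : b ∉ remAux rest := fun hm => (hb b (mem_of_mem_remAux hm)).false
  have har : a ∉ insert b (remAux rest) := by
    simpa [hab.ne] using fun hm => (ha a (mem_of_mem_remAux hm)).false
  rw [remAux_cons_cons_of_pos h, Finset.card_insert_of_notMem har,
    Finset.card_insert_of_notMem hbr]

lemma redAux_cons_cons_of_pos (h : IsRemovablePair b a rest) :
    redAux (b :: a :: rest) = redAux rest := by
  simp only [List.pairwise_cons, List.mem_cons, forall_eq_or_imp] at hp
  obtain ⟨⟨-, hb⟩, ha, -⟩ := hp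
  rw [redAux, redAux, remAux_cons_cons_of_pos h]
  simp only [List.filter_cons, Finset.mem_insert, true_or, or_true, not_true_eq_false,
    decide_false, Bool.false_eq_true, if_false]
  refine List.filter_congr fun x hx => ?_
  simp [(ha x hx).ne, (hb x hx).ne]

lemma redAux_cons_cons_of_neg (h : ¬IsRemovablePair b a rest) :
    redAux (b :: a :: rest) = b :: redAux (a :: rest) := by
  have hb : b ∉ remAux (a :: rest) := fun hm =>
    (List.rel_of_pairwise_cons hp (mem_of_mem_remAux hm)).false
  rw [redAux, redAux, remAux_cons_cons_of_neg h, List.filter_cons_of_pos (by simpa using hb)]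

end remAux

lemma even_card_remAux {r : List ℕ} (hp : r.Pairwise (· > ·)) : Even (remAux r).card := by
  induction r using remAux.induct with
  | case1 | case2 => simp [remAux]
  | case3 b a rest h ih =>
    rw [card_remAux_cons_cons_of_pos hp h]
    exact (ih hp.of_cons.of_cons).add even_two
  | case4 b a rest h _ ih =>
    rw [remAux_cons_cons_of_neg h]
    exact ih hp.of_cons

lemma card_remAux_cons_mem_Icc {x : ℕ} {r : List ℕ} (hp : (x :: r).Pairwise (· > ·)) :
    (remAux (x :: r)).card ∈ Set.Icc (remAux r).card ((remAux r).card + 2) := by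
  induction r generalizing x with
  | nil => simp [remAux]
  | cons y r ih =>
    obtain ⟨hle, hge⟩ := ih hp.of_cons
    by_cases h : IsRemovablePair x y r
    · rw [card_remAux_cons_cons_of_pos hp h]
      exact ⟨by omega, by omega⟩
    · rw [remAux_cons_cons_of_neg h]
      exact ⟨le_rfl, by omega⟩

lemma length_redAux_add_card_remAux {r : List ℕ} (hp : r.Pairwise (· > ·)) :
    (redAux r).length + (remAux r).card = r.length := by
  induction r using remAux.induct with
  | case1 | case2 => simp [redAux, remAux]
  | case3 b a rest h ih =>
    rw [redAux_cons_cons_of_pos hp h, card_remAux_cons_cons_of_pos hp h, List.length_cons,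
      List.length_cons, ← ih hp.of_cons.of_cons]
    omega
  | case4 b a rest h _ ih =>
    rw [redAux_cons_cons_of_neg hp h, remAux_cons_cons_of_neg h, List.length_cons,
      List.length_cons, ← ih hp.of_cons]
    omega

lemma le_of_mem_cons_of_pairwise {a x : ℕ} {r : List ℕ} (hp : (a :: r).Pairwise (· > ·))
    (hx : x ∈ a :: r) : x ≤ a := by
  rcases List.mem_cons.1 hx with rfl | hx
  · rfl
  · exact (List.rel_of_pairwise_cons hp hx).le

lemma isSymplectic_reverse_redAux {r : List ℕ} (hp : r.Pairwise (· > ·))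
    (hpos : ∀ x ∈ r, 1 ≤ x) : IsSymplectic (redAux r).reverse := by
  induction r using remAux.induct with
  | case1 => simp [redAux, IsSymplectic]
  | case2 x =>
    have : IsSymplectic ([] ++ [x]) :=
      isSymplectic_append_singleton.2 ⟨nofun, by simpa using hpos x (by simp)⟩
    simpa [redAux, remAux] using this
  | case3 b a rest h ih =>
    rw [redAux_cons_cons_of_pos hp h]
    exact ih hp.of_cons.of_cons fun x hx => hpos x (by simp [hx])
  | case4 b a rest h _ ih =>
    have hs := ih hp.of_cons fun x hx => hpos x (List.mem_cons_of_mem b hx)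
    rw [redAux_cons_cons_of_neg hp h, List.reverse_cons, isSymplectic_append_singleton,
      List.length_reverse]
    refine ⟨hs, ?_⟩
    have hsa : 2 * (redAux (a :: rest)).length ≤ a + 1 := by
      simpa using hs.two_mul_length_le fun x hx =>
        le_of_mem_cons_of_pairwise hp.of_cons (List.mem_of_mem_filter (List.mem_reverse.1 hx))
    have hab : a < b := List.rel_of_pairwise_cons hp (by simp)
    by_cases hba : Even b ∧ a + 1 = b
    · -- the pair `a, b` was kept only because of the numerical test
      have hnum : 2 * (rest.length + 2) ≤ b + (remAux rest).card + 1 := by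
        by_contra hc
        exact h ⟨hba.1, hba.2, by omega⟩
      have hlen := length_redAux_add_card_remAux hp.of_cons
      have hcard := (card_remAux_cons_mem_Icc hp.of_cons).1
      simp only [List.length_cons] at hlen
      omega
    · rcases Nat.even_or_odd b with he | ⟨w, hw⟩
      · have : a + 1 ≠ b := fun hc => hba ⟨he, hc⟩
        omega
      · omega

lemma two_mul_length_le_add_card_remAux {r : List ℕ} (hp : r.Pairwise (· > ·)) {n : ℕ}
    (hbd : ∀ x ∈ r, 1 ≤ x ∧ x ≤ 2 * n) : 2 * r.length ≤ 2 * n + (remAux r).card := by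
  induction r using remAux.induct generalizing n with
  | case1 => simp
  | case2 x =>
    have := hbd x (by simp)
    simp only [remAux, List.length_singleton, Finset.card_empty]
    omega
  | case3 b a rest h ih =>
    rw [card_remAux_cons_cons_of_pos hp h]
    obtain ⟨⟨w, hw⟩, hab, -⟩ := h
    have hb := hbd b (by simp)
    have hrest : ∀ x ∈ rest, 1 ≤ x ∧ x ≤ 2 * (n - 1) := fun x hx => by
      have := List.rel_of_pairwise_cons hp.of_cons hx
      have := hbd x (by simp [hx])
      omega
    have := ih hp.of_cons.of_cons hrest
    simp only [List.length_cons]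
    omega
  | case4 b a rest h _ ih =>
    rw [remAux_cons_cons_of_neg h]
    have hab : a < b := List.rel_of_pairwise_cons hp (by simp)
    have hb := hbd b (by simp)
    have hcard := (card_remAux_cons_mem_Icc hp.of_cons).1
    simp only [List.length_cons]
    by_cases hba : Even b ∧ a + 1 = b
    · have hnum : 2 * (rest.length + 2) ≤ b + (remAux rest).card + 1 := by
        by_contra hc
        exact h ⟨hba.1, hba.2, by omega⟩
      obtain ⟨w, hw⟩ := hba.1
      obtain ⟨c, hc⟩ := even_card_remAux hp.of_cons.of_cons
      omega
    · have ha : a + 2 ≤ 2 * n := by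
        rcases Nat.even_or_odd b with he | ⟨w, hw⟩
        · have : a + 1 ≠ b := fun hc => hba ⟨he, hc⟩
          omega
        · omega
      have hrest : ∀ x ∈ a :: rest, 1 ≤ x ∧ x ≤ 2 * (n - 1) := fun x hx => by
        have := le_of_mem_cons_of_pairwise hp.of_cons hx
        have := hbd x (List.mem_cons_of_mem b hx)
        omega
      have := ih hp.of_cons hrest
      simp only [List.length_cons] at this
      omega

theorem stmt14_general (n : ℕ) (a : List ℕ)
    (hinc : a.Chain' (· < ·)) (hbd : ∀ x ∈ a, 1 ≤ x ∧ x ≤ 2 * n) :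
    (∀ i, 1 ≤ i → i ≤ (redSeq a).length →
      2 * i - 1 ≤ (redSeq a).getD (i - 1) 0) ∧
    (redSeq a).length ≤ min a.length (2 * n - a.length) ∧
    Even (a.length - (redSeq a).length) := by
  have hp : a.reverse.Pairwise (· > ·) :=
    List.pairwise_reverse.2 (List.isChain_iff_pairwise.1 hinc)
  have hbd' : ∀ x ∈ a.reverse, 1 ≤ x ∧ x ≤ 2 * n := fun x hx => hbd x (List.mem_reverse.1 hx)
  have hsymp := isSymplectic_reverse_redAux hp fun x hx => (hbd' x hx).1
  have hlen := length_redAux_add_card_remAux hp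
  have hbound := two_mul_length_le_add_card_remAux hp hbd'
  rw [← redSeq_eq_reverse_redAux] at hsymp
  rw [← List.length_reverse, ← redSeq_eq_reverse_redAux, List.length_reverse] at hlen
  rw [List.length_reverse] at hbound
  refine ⟨fun i hi hik => ?_, le_min (by omega) (by omega), ?_⟩
  · rw [List.getD_eq_getElem _ _ (by omega)]
    have := hsymp (i - 1) (by omega)
    omega
  · rw [show a.length - (redSeq a).length = (remAux a.reverse).card by omega]
    exact even_card_remAux hp

theorem stmt14 (n : ℕ) (hn : 1 ≤ n) (a : List ℕ)
    (hinc : a.Chain' (· < ·)) (hbd : ∀ x ∈ a, 1 ≤ x ∧ x ≤ 2 * n)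
    (hlen : a.length ≤ 2 * n) :
    (∀ i, 1 ≤ i → i ≤ (redSeq a).length →
      2 * i - 1 ≤ (redSeq a).getD (i - 1) 0) ∧
    (redSeq a).length ≤ min a.length (2 * n - a.length) ∧
    Even (a.length - (redSeq a).length) :=
  stmt14_general n a hinc hbd
end
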